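/- arXiv:2204.05594 — 3 statements merged into one kernel-verified Lean document; each statement's English description precedes it below -/
import Mathlib

section
/- Let B be a finite-dimensional algebra over an algebraically closed field K, and let I₁,…,I_k be ideals of B with Ĩ = I₁+⋯+I_k. The function λ : B/I₁ × ⋯ × B/I_k → ℤ_{≥0} sending (y₁,…,y_k) to dim_K(B/(Ĩ + ⟨y₁,…,y_k⟩)) is upper semicontinuous with respect to the Zariski topology on B/I₁ × ⋯ × B/I_k viewed as an affine variety. -/
/-- A subset of a `K`-module `V` is Zariski closed if it is the common zero locus of a family
of polynomial functions on `V`, i.e. of elements of the subalgebra of `V → K` generated by the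
linear functionals. -/
def IsZariskiClosed (K : Type*) {V : Type*} [CommRing K] [AddCommGroup V] [Module K V]
    (s : Set V) : Prop :=
  ∃ S : Set (V → K),
    (∀ f ∈ S, f ∈ Algebra.adjoin K {g : V → K | ∃ φ : Module.Dual K V, g = ⇑φ}) ∧
    s = {v | ∀ f ∈ S, f v = 0}

/-
Choose `K`-linear sections `sⱼ` of the quotient maps `B → B ⧸ Iⱼ` and a `K`-basis `e` of `B`.
As a `K`-subspace, `Ĩ + ⟨y₁, …, y_k⟩` is spanned by a basis of `Ĩ` together with the products
`eᵢ * sⱼ (yⱼ)`, a finite family of vectors depending affinely on `y`. Hence `λ(y) ≥ c` says that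
this family spans a subspace of dimension at most `dim B - c`, i.e. that all minors of size
`dim B - c + 1` of its coordinate matrix vanish, and these minors are polynomial in `y`.
-/

universe u

open Module Set Submodule

section LinearAlgebra

variable {K V : Type*} [Field K] [AddCommGroup V] [Module K V]

theorem exists_linearIndependent_comp_of_le_finrank_span {ι : Type*} [Finite ι] (v : ι → V)
    {d : ℕ} (hd : d ≤ finrank K (span K (range v))) :
    ∃ r : Fin d → ι, LinearIndependent K (v ∘ r) := by
  obtain ⟨κ, a, ha, hspan, hli⟩ := exists_linearIndependent' K v
  have : Finite κ := Finite.of_injective a ha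
  have : Fintype κ := Fintype.ofFinite κ
  rw [← hspan, finrank_span_eq_card hli] at hd
  obtain ⟨g⟩ : Nonempty (Fin d ↪ κ) :=
    Function.Embedding.nonempty_of_card_le (by simpa using hd)
  exact ⟨a ∘ g, hli.comp g g.injective⟩

theorem Matrix.rank_le_iff_det_submatrix_eq_zero {m n : Type*} [Fintype m] [Fintype n]
    (M : Matrix m n K) (d : ℕ) :
    M.rank ≤ d ↔
      ∀ (r : Fin (d + 1) → m) (c : Fin (d + 1) → n), (M.submatrix r c).det = 0 := by
  constructor
  · intro h r c
    by_contra hdet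
    have hunit := (M.submatrix r c).rank_of_isUnit
      ((Matrix.isUnit_iff_isUnit_det _).mpr (isUnit_iff_ne_zero.mpr hdet))
    have := M.rank_submatrix_le r c
    simp only [Fintype.card_fin] at hunit
    omega
  · contrapose!
    intro hd
    obtain ⟨r, hr⟩ := exists_linearIndependent_comp_of_le_finrank_span M.row
      (M.rank_eq_finrank_span_row ▸ hd)
    have hN : (M.submatrix r id).rank = d + 1 := by
      simpa using LinearIndependent.rank_matrix (M := M.submatrix r id) hr
    obtain ⟨c, hc⟩ := exists_linearIndependent_comp_of_le_finrank_span (M.submatrix r id).col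
      ((M.submatrix r id).rank_eq_finrank_span_cols ▸ hN.ge)
    have hunit := Matrix.linearIndependent_cols_iff_isUnit (A := M.submatrix r c) |>.mp hc
    exact ⟨r, c, ((Matrix.isUnit_iff_isUnit_det _).mp hunit).ne_zero⟩

end LinearAlgebra

section Zariski

variable (K V : Type*) [Field K] [AddCommGroup V] [Module K V]

def regularFunctions : Subalgebra K (V → K) :=
  Algebra.adjoin K {g : V → K | ∃ φ : Module.Dual K V, g = ⇑φ}

variable {K V}

theorem dual_mem_regularFunctions (φ : Module.Dual K V) : ⇑φ ∈ regularFunctions K V :=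
  Algebra.subset_adjoin ⟨φ, rfl⟩

theorem comp_affineMap_mem_regularFunctions {W : Type*} [AddCommGroup W] [Module K W]
    (φ : Module.Dual K W) (f : V →ᵃ[K] W) : ⇑φ ∘ f ∈ regularFunctions K V := by
  have : ⇑φ ∘ f = ⇑(φ ∘ₗ f.linear) + algebraMap K (V → K) (φ (f 0)) := by
    conv_lhs => rw [f.decomp]
    ext v
    simp
  rw [this]
  exact add_mem (dual_mem_regularFunctions _) (Subalgebra.algebraMap_mem _ _)

theorem det_mem_regularFunctions {n : Type*} [Fintype n] [DecidableEq n]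
    (f : n → n → V → K) (hf : ∀ a b, f a b ∈ regularFunctions K V) :
    (fun v => (Matrix.of fun a b => f a b v).det) ∈ regularFunctions K V := by
  let F : Matrix n n (regularFunctions K V) := Matrix.of fun a b => ⟨f a b, hf a b⟩
  have : (fun v => (Matrix.of fun a b => f a b v).det) = F.det := by
    ext v
    rw [← Subalgebra.coe_val, AlgHom.map_det (regularFunctions K V).val F]
    exact (RingHom.map_det (Pi.evalRingHom (fun _ : V => K) v)
      ((regularFunctions K V).val.mapMatrix F)).symm
  exact this ▸ F.det.2

theorem isZariskiClosed_setOf_forall_eq_zero {ι : Type*} (f : ι → V → K)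
    (hf : ∀ i, f i ∈ regularFunctions K V) : IsZariskiClosed K {v | ∀ i, f i v = 0} :=
  ⟨range f, by rintro _ ⟨i, rfl⟩; exact hf i, by ext; simp⟩

theorem isZariskiClosed_empty : IsZariskiClosed K (∅ : Set V) :=
  ⟨{1}, by rintro _ rfl; exact one_mem _, by ext; simp⟩

theorem isZariskiClosed_setOf_finrank_span_le {W ι : Type*} [AddCommGroup W] [Module K W]
    [FiniteDimensional K W] [Fintype ι] (w : ι → V →ᵃ[K] W) (d : ℕ) :
    IsZariskiClosed K {v | finrank K (span K (range fun i => w i v)) ≤ d} := by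
  let e := finBasis K W
  let M : V → Matrix ι (Fin (finrank K W)) K := fun v => Matrix.of fun i b => e.repr (w i v) b
  have hrank : ∀ v, (M v).rank = finrank K (span K (range fun i => w i v)) := by
    intro v
    have : (M v).row = e.equivFun ∘ fun i => w i v := rfl
    rw [Matrix.rank_eq_finrank_span_row, this, range_comp, span_image_linearEquiv,
      LinearEquiv.finrank_map_eq]
  have hset : {v | finrank K (span K (range fun i => w i v)) ≤ d} =
      {v | ∀ rc : (Fin (d + 1) → ι) × (Fin (d + 1) → Fin (finrank K W)),
        ((M v).submatrix rc.1 rc.2).det = 0} := by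
    ext v
    simp only [mem_ofPred_eq, ← hrank, Matrix.rank_le_iff_det_submatrix_eq_zero, Prod.forall]
  rw [hset]
  exact isZariskiClosed_setOf_forall_eq_zero _ fun rc =>
    det_mem_regularFunctions (fun a b v => e.repr (w (rc.1 a) v) (rc.2 b)) fun a b =>
      comp_affineMap_mem_regularFunctions (e.coord (rc.2 b)) (w (rc.1 a))

end Zariski

section Ideals

variable {B : Type*} [CommRing B]

theorem Ideal.sup_span_setOf_mk_eq {ι : Type*} (I : ι → Ideal B) (J : Ideal B)
    (hIJ : ∀ j, I j ≤ J) (y : ∀ j, B ⧸ I j) (z : ι → B)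
    (hz : ∀ j, Ideal.Quotient.mk (I j) (z j) = y j) :
    J ⊔ Ideal.span {b | ∃ j, Ideal.Quotient.mk (I j) b = y j} = J ⊔ Ideal.span (range z) := by
  apply le_antisymm
  · refine sup_le le_sup_left (Ideal.span_le.mpr ?_)
    rintro b ⟨j, hb⟩
    have hdiff : b - z j ∈ J := hIJ j (Ideal.Quotient.eq.mp (hb.trans (hz j).symm))
    have hzj : z j ∈ J ⊔ Ideal.span (range z) := mem_sup_right (subset_span ⟨j, rfl⟩)
    simpa using add_mem (mem_sup_left hdiff) hzj
  · exact sup_le_sup_left (Ideal.span_mono (by rintro _ ⟨j, rfl⟩; exact ⟨j, hz j⟩)) J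

variable (K : Type*) [Field K] [Algebra K B]

theorem Ideal.finrank_quotient_add_finrank_restrictScalars [FiniteDimensional K B]
    (J : Ideal B) : finrank K (B ⧸ J) + finrank K (J.restrictScalars K) = finrank K B := by
  rw [← (Submodule.Quotient.restrictScalarsEquiv K J).finrank_eq]
  exact Submodule.finrank_quotient_add_finrank _

theorem Ideal.restrictScalars_sup_span_range {κ ι ι' : Type*} (J : Ideal B)
    (t : Basis κ K (J.restrictScalars K)) (e : Basis ι K B) (z : ι' → B) :
    (J ⊔ Ideal.span (range z)).restrictScalars K =
      Submodule.span K
        (range (Sum.elim (fun i => (t i : B)) fun p : ι × ι' => e p.1 * z p.2)) := by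
  have ht : Submodule.span K (range fun i => (t i : B)) = J.restrictScalars K := by
    rw [show (fun i => (t i : B)) = (J.restrictScalars K).subtype ∘ t from rfl, range_comp,
      span_image, t.span_eq, map_subtype_top]
  rw [restrictScalars_sup, Set.Sum.elim_range, Submodule.span_union, ht, Ideal.span,
    ← span_smul_of_span_eq_top e.span_eq, range_smul_range]
  rfl

theorem Ideal.exists_affineMap_span_eq_sup_span_setOf_mk_eq [FiniteDimensional K B]
    {ι : Type u} [Fintype ι] (I : ι → Ideal B) :
    ∃ (κ : Type u) (_ : Fintype κ) (w : κ → (∀ j, B ⧸ I j) →ᵃ[K] B), ∀ y,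
      Submodule.span K (range fun i => w i y) = Submodule.restrictScalars K
        ((⨆ j, I j) ⊔ Ideal.span {b | ∃ j, Ideal.Quotient.mk (I j) b = y j}) := by
  choose s hs using fun j =>
    (Ideal.Quotient.mkₐ K (I j)).toLinearMap.exists_rightInverse_of_surjective
      (LinearMap.range_eq_top.mpr (Ideal.Quotient.mkₐ_surjective K (I j)))
  let e := finBasis K B
  let t := finBasis K ((⨆ j, I j).restrictScalars K)
  refine ⟨_, inferInstance, Sum.elim (fun i => AffineMap.const K _ (t i : B))
    fun p : Fin (finrank K B) × ι =>
      (LinearMap.mulLeft K (e p.1) ∘ₗ s p.2 ∘ₗ LinearMap.proj p.2).toAffineMap, fun y => ?_⟩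
  rw [Ideal.sup_span_setOf_mk_eq I _ (le_iSup I) y (fun j => s j (y j))
    (fun j => LinearMap.congr_fun (hs j) (y j)), Ideal.restrictScalars_sup_span_range K _ t e]
  congr 2
  ext (i | p) <;> rfl

end Ideals

theorem length_upper_semicontinuous_general (K B : Type*) [Field K] [CommRing B]
    [Algebra K B] [Module.Finite K B] (k : ℕ) (I : Fin k → Ideal B) (c : ℕ) :
    IsZariskiClosed K
      {y : ∀ j : Fin k, B ⧸ I j |
        c ≤ Module.finrank K
          (B ⧸ ((⨆ j, I j) +
            Ideal.span {b : B | ∃ j : Fin k, Ideal.Quotient.mk (I j) b = y j}))} := by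
  have hdim := fun y : ∀ j, B ⧸ I j => Ideal.finrank_quotient_add_finrank_restrictScalars K
    ((⨆ j, I j) ⊔ Ideal.span {b : B | ∃ j : Fin k, Ideal.Quotient.mk (I j) b = y j})
  simp only [Submodule.add_eq_sup]
  by_cases hc : c ≤ finrank K B
  · obtain ⟨κ, _, w, hw⟩ := Ideal.exists_affineMap_span_eq_sup_span_setOf_mk_eq K I
    convert isZariskiClosed_setOf_finrank_span_le w (finrank K B - c) using 1
    ext y
    have := hw y ▸ hdim y
    simp only [mem_ofPred_eq]
    omega
  · convert isZariskiClosed_empty (K := K) using 1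
    ext y
    have := hdim y
    simp only [mem_ofPred_eq, mem_empty_iff_false, iff_false]
    omega

/-- Lemma 2.7 (basic semicontinuity): for a finite-dimensional algebra `B` over an algebraically
closed field `K` and ideals `I₁, …, I_k` with `Ĩ = I₁ + ⋯ + I_k`, the function
`(y₁,…,y_k) ↦ dim_K (B / (Ĩ + ⟨y₁,…,y_k⟩))` on `B/I₁ × ⋯ × B/I_k` is upper semicontinuous in
the Zariski topology, i.e. each superlevel set `{y | λ(y) ≥ c}` is Zariski closed. -/
theorem length_upper_semicontinuous (K B : Type*) [Field K] [IsAlgClosed K] [CommRing B]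
    [Algebra K B] [Module.Finite K B] (k : ℕ) (I : Fin k → Ideal B) (c : ℕ) :
    IsZariskiClosed K
      {y : ∀ j : Fin k, B ⧸ I j |
        c ≤ Module.finrank K
          (B ⧸ ((⨆ j, I j) +
            Ideal.span {b : B | ∃ j : Fin k, Ideal.Quotient.mk (I j) b = y j}))} :=
  length_upper_semicontinuous_general K B k I c
end

section
/- Algebraic m-adically closed (AmAC) classes are closed under countable intersection: if P^j = lim← P^j_i for j = 1,2,… are AmAC classes in B = K[[x₁,…,x_n]]/I, then ⋂_j P^j = lim← (⋂_{j ≤ i} P^j_i), and in particular the countable intersection is again an inverse limit of constructible subsets of the quotients B/m^i. -/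
/-- A subset is Zariski constructible if it is a finite union of differences of Zariski closed
sets. -/
def IsZariskiConstructible (K : Type*) {V : Type*} [CommRing K] [AddCommGroup V] [Module K V]
    (s : Set V) : Prop :=
  ∃ (n : ℕ) (C D : Fin n → Set V),
    (∀ i, IsZariskiClosed K (C i) ∧ IsZariskiClosed K (D i)) ∧ s = ⋃ i, C i \ D i

/-!
Since the levels `P^j_i` are compatible with the projections `B/m^k → B/m^i`, membership of
`b mod m^k` in `P^j_k` forces membership of `b mod m^i` in `P^j_i` for every `i ≤ k`; so, given
`i` and `j`, level `i` of `P^j` can be read off at level `max i j`, where `j` is among the indices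
`≤ max i j`. Constructibility of `⋂_{j ≤ i} P^j_i` holds because Zariski closed sets are stable
under intersection (union of the equations) and finite union (products of the equations).
-/

section ZariskiClosed

variable {K V : Type*} [CommRing K] [AddCommGroup V] [Module K V]

lemma IsZariskiClosed.inter {s t : Set V} (hs : IsZariskiClosed K s)
    (ht : IsZariskiClosed K t) : IsZariskiClosed K (s ∩ t) := by
  obtain ⟨S, hS, rfl⟩ := hs
  obtain ⟨T, hT, rfl⟩ := ht
  refine ⟨S ∪ T, fun f hf => hf.elim (hS f) (hT f), ?_⟩
  ext v
  simp only [Set.mem_inter_iff, Set.mem_ofPred_eq, Set.mem_union]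
  exact ⟨fun ⟨h₁, h₂⟩ f hf => hf.elim (h₁ f) (h₂ f),
    fun h => ⟨fun f hf => h f (Or.inl hf), fun f hf => h f (Or.inr hf)⟩⟩

lemma IsZariskiClosed.union [NoZeroDivisors K] {s t : Set V} (hs : IsZariskiClosed K s)
    (ht : IsZariskiClosed K t) : IsZariskiClosed K (s ∪ t) := by
  obtain ⟨S, hS, rfl⟩ := hs
  obtain ⟨T, hT, rfl⟩ := ht
  refine ⟨{h | ∃ f ∈ S, ∃ g ∈ T, h = f * g}, ?_, ?_⟩
  · rintro h ⟨f, hf, g, hg, rfl⟩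
    exact mul_mem (hS f hf) (hT g hg)
  ext v
  simp only [Set.mem_union, Set.mem_ofPred_eq]
  constructor
  · rintro (h | h) _ ⟨f, hf, g, hg, rfl⟩
    · simp [h f hf]
    · simp [h g hg]
  · intro h
    by_contra! ⟨⟨f, hf, hfv⟩, ⟨g, hg, hgv⟩⟩
    exact mul_ne_zero hfv hgv (h (f * g) ⟨f, hf, g, hg, rfl⟩)

end ZariskiClosed

section ZariskiConstructible

variable {K V : Type*} [CommRing K] [AddCommGroup V] [Module K V]

lemma IsZariskiConstructible.univ [Nontrivial K] :
    IsZariskiConstructible K (Set.univ : Set V) := by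
  have hempty : IsZariskiClosed K (∅ : Set V) := ⟨{1}, by simp [one_mem], by simp⟩
  exact ⟨1, fun _ => Set.univ, fun _ => ∅, fun _ => ⟨⟨∅, by simp, by simp⟩, hempty⟩,
    by simp [Set.iUnion_const]⟩

lemma IsZariskiConstructible.inter [NoZeroDivisors K] {s t : Set V}
    (hs : IsZariskiConstructible K s) (ht : IsZariskiConstructible K t) :
    IsZariskiConstructible K (s ∩ t) := by
  obtain ⟨n, C, D, hCD, rfl⟩ := hs
  obtain ⟨m, C', D', hCD', rfl⟩ := ht
  let e := (finProdFinEquiv (m := n) (n := m)).symm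
  refine ⟨n * m, fun k => C (e k).1 ∩ C' (e k).2, fun k => D (e k).1 ∪ D' (e k).2,
    fun k => ⟨(hCD _).1.inter (hCD' _).1, (hCD _).2.union (hCD' _).2⟩, ?_⟩
  ext v
  simp only [Set.mem_inter_iff, Set.mem_iUnion, Set.mem_sdiff, Set.mem_union, not_or]
  constructor
  · rintro ⟨⟨i, hi, hi'⟩, ⟨k, hk, hk'⟩⟩
    exact ⟨e.symm (i, k), by simpa using ⟨⟨hi, hk⟩, hi', hk'⟩⟩
  · rintro ⟨k, ⟨h₁, h₂⟩, h₃, h₄⟩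
    exact ⟨⟨_, h₁, h₃⟩, ⟨_, h₂, h₄⟩⟩

lemma IsZariskiConstructible.biInter_finset [IsDomain K] {ι : Type*} (s : Finset ι)
    {f : ι → Set V} (hf : ∀ j ∈ s, IsZariskiConstructible K (f j)) :
    IsZariskiConstructible K (⋂ j ∈ s, f j) := by
  classical
  induction s using Finset.induction with
  | empty => simpa using IsZariskiConstructible.univ
  | insert j s _ ih =>
    rw [Finset.set_biInter_insert]
    exact (hf j (Finset.mem_insert_self j s)).inter
      (ih fun i hi => hf i (Finset.mem_insert_of_mem hi))

end ZariskiConstructible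

section InverseLimit

variable {R : Type*} [CommRing R] {I : ℕ → Ideal R} (hI : ∀ i, I (i + 1) ≤ I i)

include hI in
lemma Ideal.Quotient.mk_mem_of_mapsTo_factor {Q : (i : ℕ) → Set (R ⧸ I i)}
    (hQ : ∀ i, Set.MapsTo (Ideal.Quotient.factor (hI i)) (Q (i + 1)) (Q i))
    {b : R} {i k : ℕ} (hik : i ≤ k) (hb : Ideal.Quotient.mk (I k) b ∈ Q k) :
    Ideal.Quotient.mk (I i) b ∈ Q i := by
  induction k, hik using Nat.le_induction with
  | base => exact hb
  | succ k _ ih =>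
    apply ih
    simpa only [Ideal.Quotient.factor_mk] using hQ k hb

include hI in
lemma Ideal.Quotient.iInter_limit_eq_limit_biInter {Q : ℕ → (i : ℕ) → Set (R ⧸ I i)}
    (hQ : ∀ j i, Set.MapsTo (Ideal.Quotient.factor (hI i)) (Q j (i + 1)) (Q j i)) :
    (⋂ j, {b : R | ∀ i, Ideal.Quotient.mk (I i) b ∈ Q j i}) =
      {b : R | ∀ i, Ideal.Quotient.mk (I i) b ∈ ⋂ j ≤ i, Q j i} := by
  ext b
  simp only [Set.mem_iInter, Set.mem_ofPred_eq]
  exact ⟨fun h i j _ => h j i, fun h j i =>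
    mk_mem_of_mapsTo_factor hI (hQ j) (le_max_left i j) (h (max i j) j (le_max_right i j))⟩

end InverseLimit

theorem AmAC_countable_intersection_general (K B : Type*) [Field K]
    [CommRing B] [Algebra K B] [IsLocalRing B]
    (P : ℕ → (i : ℕ) → Set (B ⧸ IsLocalRing.maximalIdeal B ^ i))
    (hconstr : ∀ j i, IsZariskiConstructible K (P j i))
    (hcompat : ∀ j i, Set.MapsTo
      (Ideal.Quotient.factor (S := IsLocalRing.maximalIdeal B ^ (i + 1))
        (T := IsLocalRing.maximalIdeal B ^ i) (Ideal.pow_le_pow_right (Nat.le_succ i)))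
      (P j (i + 1)) (P j i)) :
    (⋂ j : ℕ, {b : B | ∀ i : ℕ,
        Ideal.Quotient.mk (IsLocalRing.maximalIdeal B ^ i) b ∈ P j i}) =
      {b : B | ∀ i : ℕ,
        Ideal.Quotient.mk (IsLocalRing.maximalIdeal B ^ i) b ∈ ⋂ j ≤ i, P j i} ∧
    ∀ i : ℕ, IsZariskiConstructible K (⋂ j ≤ i, P j i) := by
  refine ⟨Ideal.Quotient.iInter_limit_eq_limit_biInter _ hcompat, fun i => ?_⟩
  have hIic : (⋂ j ≤ i, P j i) = ⋂ j ∈ Finset.Iic i, P j i := by simp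
  rw [hIic]
  exact IsZariskiConstructible.biInter_finset _ fun j _ => hconstr j i

/-- Lemma 3.6(3): AmAC classes are closed under countable intersections. If
`P^j = lim← P^j_i` are algebraic `m`-adically closed classes (inverse limits of constructible
subsets of the `B/m^i`), then `⋂_j P^j = lim← (⋂_{j ≤ i} P^j_i)`, and each `⋂_{j ≤ i} P^j_i`
is again constructible. -/
theorem AmAC_countable_intersection (K B : Type*) [Field K] [IsAlgClosed K]
    [Uncountable K] [CommRing B] [Algebra K B] [IsLocalRing B]
    (P : ℕ → (i : ℕ) → Set (B ⧸ IsLocalRing.maximalIdeal B ^ i))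
    (hconstr : ∀ j i, IsZariskiConstructible K (P j i))
    (hcompat : ∀ j i, Set.MapsTo
      (Ideal.Quotient.factor (S := IsLocalRing.maximalIdeal B ^ (i + 1))
        (T := IsLocalRing.maximalIdeal B ^ i) (Ideal.pow_le_pow_right (Nat.le_succ i)))
      (P j (i + 1)) (P j i)) :
    (⋂ j : ℕ, {b : B | ∀ i : ℕ,
        Ideal.Quotient.mk (IsLocalRing.maximalIdeal B ^ i) b ∈ P j i}) =
      {b : B | ∀ i : ℕ,
        Ideal.Quotient.mk (IsLocalRing.maximalIdeal B ^ i) b ∈ ⋂ j ≤ i, P j i} ∧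
    ∀ i : ℕ, IsZariskiConstructible K (⋂ j ≤ i, P j i) :=
  AmAC_countable_intersection_general K B P hconstr hcompat
end

section
/- Let K be an infinite field and R a Noetherian complete local K-algebra of dimension 1 with maximal ideal m, residue field K, multiplicity e, and m-torsion length t. For a suitable x ∈ m \ m² as in Noether normalization with √(x) = m, it holds for all k ≤ t (up to the point q where the lengths of (x^i)/(x^{i+1}) stabilize) that length(R/(x^{k+1})) ≥ (e+1)·k. -/
/-- The length of a module, defined as the Krull dimension of its lattice of submodules. -/
noncomputable def moduleLength (R M : Type*) [Ring R] [AddCommGroup M] [Module R M] :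
    WithBot ℕ∞ :=
  Order.krullDim (Submodule R M)

/-- The `m`-power torsion of `R`: elements annihilated by some power of `m`. -/
def mPowTorsion {R : Type*} [CommRing R] (m : Ideal R) : Submodule R R where
  carrier := {r : R | ∃ n : ℕ, ∀ a ∈ m ^ n, a * r = 0}
  zero_mem' := ⟨0, fun a _ => mul_zero a⟩
  add_mem' := by
    rintro x y ⟨n, hn⟩ ⟨k, hk⟩
    refine ⟨n + k, fun a ha => ?_⟩
    have h1 : a ∈ m ^ n := Ideal.pow_le_pow_right (Nat.le_add_right n k) ha
    have h2 : a ∈ m ^ k := Ideal.pow_le_pow_right (Nat.le_add_left k n) ha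
    rw [mul_add, hn a h1, hk a h2, add_zero]
  smul_mem' := by
    rintro c x ⟨n, hn⟩
    exact ⟨n, fun a ha => by rw [smul_eq_mul, mul_left_comm, hn a ha, mul_zero]⟩

/-!
Choose `x ∈ m` outside `m²` and outside every minimal prime (prime avoidance); in dimension one
this forces `√(x) = m`. For any ideal `C`, the lengths of `R/(C + (x^n))` are the partial sums of
the lengths of `(C + (x^j))/(C + (x^(j+1)))`, which decrease since multiplication by `x` maps each
onto the next, and which are all at least `e` since `R/(x^(n+1))` surjects onto `R/m^(n+1)`.
The `m`-torsion `T` is killed by some `m^s`, so it meets `(x^n)` trivially for `n ≥ s` and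
`ℓ(R/(x^n)) = t + ℓ(R/(T + (x^n))) ≥ t + n e`. If the `k`-th step of the chain for `(x^n)` has
already dropped to `e`, all later steps equal `e` and comparing with `t + n e` gives
`ℓ(R/(x^(k+1))) ≥ t + (k+1) e`; otherwise the first `k+1` steps are all at least `e + 1`.
Either way `ℓ(R/(x^(k+1))) ≥ (e+1) k` for `k ≤ t`.
-/

open IsLocalRing Filter Finset Module Topology

lemma moduleLength_eq_length (R M : Type*) [Ring R] [AddCommGroup M] [Module R M] :
    moduleLength R M = Module.length R M :=
  (Module.coe_length R M).symm

namespace Module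

variable {R M N : Type*} [Ring R] [AddCommGroup M] [Module R M] [AddCommGroup N] [Module R N]

lemma length_eq_length_add_length_quotient (p : Submodule R M) :
    length R M = length R p + length R (M ⧸ p) :=
  length_eq_add_of_exact p.subtype p.mkQ p.injective_subtype p.mkQ_surjective
    (LinearMap.exact_subtype_mkQ p)

lemma length_map_le (f : M →ₗ[R] N) (p : Submodule R M) : length R (p.map f) ≤ length R p :=
  length_le_of_surjective (f.submoduleMap p) (f.submoduleMap_surjective p)

lemma length_map_le_length_map_mkQ (f : M →ₗ[R] N) {q : Submodule R M}
    (hq : q ≤ LinearMap.ker f) (p : Submodule R M) :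
    length R (p.map f) ≤ length R (p.map q.mkQ) := by
  rw [← q.liftQ_mkQ f hq, Submodule.map_comp]
  exact length_map_le _ _

lemma length_quotient_eq_length_map_add (p q : Submodule R M) :
    length R (M ⧸ q) = length R (p.map q.mkQ) + length R (M ⧸ (p ⊔ q)) := by
  have hmap : (p ⊔ q).map q.mkQ = p.map q.mkQ := by
    rw [Submodule.map_sup, Submodule.mkQ_map_self, sup_bot_eq]
  rw [length_eq_length_add_length_quotient ((p ⊔ q).map q.mkQ),
    (Submodule.quotientQuotientEquivQuotient q (p ⊔ q) le_sup_right).length_eq, hmap]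

lemma length_quotient_le_add (p q : Submodule R M) :
    length R (M ⧸ q) ≤ length R p + length R (M ⧸ (p ⊔ q)) := by
  rw [length_quotient_eq_length_map_add p q]
  gcongr
  exact length_map_le _ _

lemma length_quotient_eq_add_of_disjoint {p q : Submodule R M} (h : Disjoint p q) :
    length R (M ⧸ q) = length R p + length R (M ⧸ (p ⊔ q)) := by
  rw [length_quotient_eq_length_map_add p q]
  congr 1
  refine le_antisymm (length_map_le _ _) (length_le_of_injective (q.mkQ.submoduleMap p) ?_)
  intro a b hab
  have hsub : (a : M) - b ∈ q := (Submodule.Quotient.eq q).mp congr(($hab : M ⧸ q))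
  exact Subtype.ext (sub_eq_zero.mp (h.le_bot ⟨p.sub_mem a.2 b.2, hsub⟩))

lemma length_quotient_antitone {p q : Submodule R M} (h : p ≤ q) :
    length R (M ⧸ q) ≤ length R (M ⧸ p) :=
  length_le_of_surjective (Submodule.factor h) (Submodule.factor_surjective h)

end Module

section PowerChain

variable {R : Type*} [CommRing R]

noncomputable def powGap (C : Ideal R) (x : R) (j : ℕ) : ℕ∞ :=
  length R (Submodule.map (C ⊔ Ideal.span {x ^ (j + 1)}).mkQ (C ⊔ Ideal.span {x ^ j}))

lemma sup_span_pow_succ_le (C : Ideal R) (x : R) (j : ℕ) :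
    C ⊔ Ideal.span {x ^ (j + 1)} ≤ C ⊔ Ideal.span {x ^ j} :=
  sup_le_sup_left (Ideal.span_singleton_le_span_singleton.mpr (pow_dvd_pow x j.le_succ)) C

lemma length_quotient_sup_span_pow_succ (C : Ideal R) (x : R) (j : ℕ) :
    length R (R ⧸ (C ⊔ Ideal.span {x ^ (j + 1)})) =
      powGap C x j + length R (R ⧸ (C ⊔ Ideal.span {x ^ j})) := by
  rw [powGap, length_quotient_eq_length_map_add (C ⊔ Ideal.span {x ^ j}),
    sup_eq_left.mpr (sup_span_pow_succ_le C x j)]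

lemma length_quotient_sup_span_pow_eq_sum (C : Ideal R) (x : R) (n : ℕ) :
    length R (R ⧸ (C ⊔ Ideal.span {x ^ n})) = ∑ i ∈ range n, powGap C x i := by
  induction n with
  | zero => simp [length_eq_zero]
  | succ n ih => rw [length_quotient_sup_span_pow_succ, ih, sum_range_succ, add_comm]

/-- Multiplication by `x` maps `(C + (x^j)) / (C + (x^(j+1)))` onto the next quotient. -/
lemma powGap_succ_le (C : Ideal R) (x : R) (j : ℕ) : powGap C x (j + 1) ≤ powGap C x j := by
  set f := (C ⊔ Ideal.span {x ^ (j + 2)}).mkQ ∘ₗ LinearMap.mulLeft R x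
  have hmul : ∀ {i : ℕ}, C ⊔ Ideal.span {x ^ i} ≤
      Submodule.comap (LinearMap.mulLeft R x) (C ⊔ Ideal.span {x ^ (i + 1)}) := by
    intro i
    refine sup_le (fun c hc => Ideal.mem_sup_left (C.mul_mem_left x hc)) ?_
    rw [Ideal.span_le, Set.singleton_subset_iff]
    exact Ideal.mem_sup_right (by simp [pow_succ'])
  have hker : C ⊔ Ideal.span {x ^ (j + 1)} ≤ LinearMap.ker f := by
    intro r hr
    exact (Submodule.Quotient.mk_eq_zero _).mpr (hmul hr)
  have himage : Submodule.map f (C ⊔ Ideal.span {x ^ j}) =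
      Submodule.map (C ⊔ Ideal.span {x ^ (j + 2)}).mkQ (C ⊔ Ideal.span {x ^ (j + 1)}) := by
    have hsup : Submodule.map (LinearMap.mulLeft R x) (C ⊔ Ideal.span {x ^ j}) ⊔
        (C ⊔ Ideal.span {x ^ (j + 2)}) = C ⊔ Ideal.span {x ^ (j + 1)} := by
      refine le_antisymm (sup_le (Submodule.map_le_iff_le_comap.mpr hmul)
        (sup_span_pow_succ_le C x (j + 1))) (sup_le (le_sup_of_le_right le_sup_left) ?_)
      rw [Ideal.span_le, Set.singleton_subset_iff]
      refine Submodule.mem_sup_left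
        ⟨x ^ j, Ideal.mem_sup_right (Ideal.mem_span_singleton_self _), ?_⟩
      simp [pow_succ']
    rw [← hsup, Submodule.map_sup _ (C ⊔ Ideal.span {x ^ (j + 2)}), Submodule.mkQ_map_self,
      sup_bot_eq, Submodule.map_comp]
  calc powGap C x (j + 1) = length R (Submodule.map f (C ⊔ Ideal.span {x ^ j})) := by
        rw [powGap, himage]
    _ ≤ powGap C x j := length_map_le_length_map_mkQ f hker _

lemma powGap_antitone (C : Ideal R) (x : R) : Antitone (powGap C x) :=
  antitone_nat_of_succ_le (powGap_succ_le C x)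

end PowerChain

section DimensionOne

variable {R : Type*} [CommRing R] [IsLocalRing R]

lemma height_maximalIdeal_eq_one (hdim : ringKrullDim R = 1) : (maximalIdeal R).height = 1 := by
  have := maximalIdeal_height_eq_ringKrullDim (R := R)
  rw [hdim] at this
  exact_mod_cast this

lemma maximalIdeal_notMem_minimalPrimes (hdim : ringKrullDim R = 1) :
    maximalIdeal R ∉ minimalPrimes R := by
  rw [← Ideal.height_eq_zero_iff, height_maximalIdeal_eq_one hdim]
  exact one_ne_zero

lemma mem_minimalPrimes_of_lt_maximalIdeal (hdim : ringKrullDim R = 1) {P : Ideal R} [P.IsPrime]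
    (hP : P < maximalIdeal R) : P ∈ minimalPrimes R := by
  have := Ideal.height_add_one_le_of_lt_of_isPrime hP
  rw [height_maximalIdeal_eq_one hdim] at this
  rw [← Ideal.height_eq_zero_iff]
  simpa using (ENat.add_one_le_iff (by rintro h; simp [h] at this)).mp this

lemma radical_span_singleton_eq_maximalIdeal (hdim : ringKrullDim R = 1) {x : R}
    (hx : x ∈ maximalIdeal R) (hmin : ∀ P ∈ minimalPrimes R, x ∉ P) :
    (Ideal.span {x}).radical = maximalIdeal R := by
  refine le_antisymm ((maximalIdeal.isMaximal R).isPrime.radical_le_iff.mpr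
    ((Ideal.span_singleton_le_iff_mem _).mpr hx)) ?_
  rw [Ideal.radical_eq_sInf]
  refine le_sInf fun P ⟨hxP, hP⟩ => ?_
  rcases (le_maximalIdeal hP.ne_top).lt_or_eq with hlt | heq
  · exact absurd (hxP (Ideal.mem_span_singleton_self x))
      (hmin P (mem_minimalPrimes_of_lt_maximalIdeal hdim hlt))
  · exact heq.ge

variable [IsNoetherianRing R]

lemma maximalIdeal_not_le_sq (hdim : ringKrullDim R = 1) :
    ¬ maximalIdeal R ≤ maximalIdeal R ^ 2 := by
  intro hle
  have hidem : IsIdempotentElem (maximalIdeal R) :=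
    le_antisymm Ideal.mul_le_left (by rwa [← sq])
  rcases (Ideal.isIdempotentElem_iff_eq_bot_or_top_of_isLocalRing _).mp hidem with hbot | htop
  · have := height_maximalIdeal_eq_one hdim
    rw [hbot, Ideal.height_bot] at this
    exact zero_ne_one this
  · exact (maximalIdeal.isMaximal R).ne_top htop

/-- Prime avoidance: `m` is neither contained in `m²` nor in one of the finitely many minimal
primes, so some `x ∈ m` avoids all of them. -/
lemma exists_mem_maximalIdeal_notMem_sq_radical_eq (hdim : ringKrullDim R = 1) :
    ∃ x ∈ maximalIdeal R, x ∉ maximalIdeal R ^ 2 ∧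
      (Ideal.span {x}).radical = maximalIdeal R := by
  classical
  have hfin := minimalPrimes.finite_of_isNoetherianRing R
  set S := insert (maximalIdeal R ^ 2) hfin.toFinset
  have havoid : ¬ ((maximalIdeal R : Set R) ⊆ ⋃ P ∈ (S : Set (Ideal R)), (P : Set R)) := by
    intro hsub
    obtain ⟨P, hP, hle⟩ := (Ideal.subset_union_prime (f := id) (maximalIdeal R ^ 2)
      (maximalIdeal R ^ 2) (fun P hP hP2 _ =>
        (hfin.mem_toFinset.mp ((Finset.mem_insert.mp hP).resolve_left hP2)).1.1)).mp hsub
    rcases Finset.mem_insert.mp hP with rfl | hP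
    · exact maximalIdeal_not_le_sq hdim hle
    · have hmin := hfin.mem_toFinset.mp hP
      have : P = maximalIdeal R := le_antisymm (le_maximalIdeal hmin.1.1.ne_top) hle
      exact maximalIdeal_notMem_minimalPrimes hdim (this ▸ hmin)
  obtain ⟨x, hxm, hxS⟩ := Set.not_subset.mp havoid
  simp only [Set.mem_iUnion, not_exists] at hxS
  refine ⟨x, hxm, fun hx2 => hxS _ (by simp [S]) hx2,
    radical_span_singleton_eq_maximalIdeal hdim hxm fun P hP hxP => hxS P (by simp [S, hP]) hxP⟩

end DimensionOne

section Torsion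

variable {R : Type*} [CommRing R]

lemma exists_pow_annihilates_mPowTorsion [IsNoetherianRing R] (m : Ideal R) :
    ∃ s : ℕ, ∀ r ∈ mPowTorsion m, ∀ a ∈ m ^ s, a * r = 0 := by
  obtain ⟨s, hs⟩ := monotone_stabilizes_iff_noetherian.mpr inferInstance
    ⟨fun n => (m ^ n).annihilator, fun i j hij =>
      Submodule.annihilator_mono (Ideal.pow_le_pow_right hij)⟩
  refine ⟨s, fun r ⟨n, hn⟩ a ha => ?_⟩
  have hr : r ∈ (m ^ max s n).annihilator := Submodule.mem_annihilator.mpr fun b hb => by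
    rw [smul_eq_mul, mul_comm]
    exact hn b (Ideal.pow_le_pow_right (le_max_right s n) hb)
  have hstable : (m ^ s).annihilator = (m ^ max s n).annihilator := hs _ (le_max_left s n)
  rw [← hstable] at hr
  rw [mul_comm]
  exact Submodule.mem_annihilator.mp hr a ha

variable {m : Ideal R}

lemma mem_mPowTorsion_of_pow_mul_eq_zero {x : R} {c : ℕ} (hc : m ^ c ≤ Ideal.span {x}) {n : ℕ}
    {r : R} (hr : x ^ n * r = 0) : r ∈ mPowTorsion m := by
  refine ⟨c * n, fun a ha => ?_⟩
  have hxn : a ∈ Ideal.span {x ^ n} := by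
    rw [← Ideal.span_singleton_pow]
    exact Ideal.pow_right_mono hc n (pow_mul m c n ▸ ha)
  obtain ⟨v, rfl⟩ := Ideal.mem_span_singleton'.mp hxn
  rw [mul_assoc, hr, mul_zero]

lemma disjoint_mPowTorsion_span_pow {x : R} (hx : x ∈ m) {c s : ℕ}
    (hc : m ^ c ≤ Ideal.span {x}) (hs : ∀ r ∈ mPowTorsion m, ∀ a ∈ m ^ s, a * r = 0)
    {n : ℕ} (hn : s ≤ n) : Disjoint (mPowTorsion m) (Ideal.span {x ^ n}) := by
  have hxs : ∀ r ∈ mPowTorsion m, x ^ s * r = 0 :=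
    fun r hr => hs r hr _ (Ideal.pow_mem_pow hx s)
  rw [Submodule.disjoint_def]
  intro a haT haX
  obtain ⟨v, rfl⟩ := Ideal.mem_span_singleton'.mp haX
  have hv : v ∈ mPowTorsion m := mem_mPowTorsion_of_pow_mul_eq_zero hc (n := s + n) (by
    rw [pow_add, mul_assoc, mul_comm (x ^ n) v]
    exact hxs _ haT)
  rw [← Nat.sub_add_cancel hn, pow_add, mul_comm, mul_assoc, hxs v hv, mul_zero]

end Torsion

section PartialSums

lemma le_of_tendsto_div_of_le_add_mul {u : ℕ → ℕ} {e B d : ℕ}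
    (hu : Tendsto (fun n : ℕ => (u n : ℝ) / n) atTop (𝓝 e))
    (h : ∀ᶠ n in atTop, u n ≤ B + n * d) : e ≤ d := by
  have hbound : Tendsto (fun n : ℕ => (B : ℝ) / n + d) atTop (𝓝 d) := by
    simpa using (tendsto_const_div_atTop_nhds_zero_nat (B : ℝ)).add_const (d : ℝ)
  have hle : ∀ᶠ n : ℕ in atTop, (u n : ℝ) / n ≤ B / n + d := by
    filter_upwards [h, eventually_gt_atTop 0] with n hn hpos
    calc (u n : ℝ) / n ≤ (B + n * d) / n := by gcongr; exact_mod_cast hn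
      _ = B / n + d := by field_simp
  exact_mod_cast le_of_tendsto_of_tendsto hu hbound hle

lemma Antitone.sum_range_add_le {G : ℕ → ℕ} (hG : Antitone G) (j k : ℕ) :
    ∑ i ∈ range (j + k), G i ≤ ∑ i ∈ range j, G i + k * G j := by
  rw [sum_range_add]
  gcongr
  simpa using sum_le_card_nsmul (range k) (fun i => G (j + i)) (G j)
    fun i _ => hG (Nat.le_add_right j i)

lemma le_of_tendsto_div_of_le_add_sum {u G : ℕ → ℕ} {e B : ℕ} (hG : Antitone G)
    (hu : Tendsto (fun n : ℕ => (u n : ℝ) / n) atTop (𝓝 e))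
    (h : ∀ᶠ n in atTop, u n ≤ B + ∑ i ∈ range (n + 1), G i) (j : ℕ) : e ≤ G j := by
  refine le_of_tendsto_div_of_le_add_mul hu (B := B + ∑ i ∈ range (j + 1), G i) ?_
  filter_upwards [h, eventually_ge_atTop j] with n hn hjn
  have hsum := hG.sum_range_add_le (j + 1) (n - j)
  rw [show j + 1 + (n - j) = n + 1 by omega] at hsum
  have hG' : (n - j) * G (j + 1) ≤ n * G j := Nat.mul_le_mul (Nat.sub_le n j) (hG j.le_succ)
  linarith

/-- Either the partial sums grow by at least `e + 1` up to step `k`, or the sequence has already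
reached its floor `e` at `k`, and then the offset `t` is visible in the `k + 1`-st partial sum. -/
lemma mul_le_sum_range_succ_of_antitone {G : ℕ → ℕ} {e t k : ℕ} (hG : Antitone G)
    (he : ∀ j, e ≤ G j) (ht : ∀ᶠ n in atTop, t + n * e ≤ ∑ i ∈ range n, G i)
    (hk : k ≤ t) : (e + 1) * k ≤ ∑ i ∈ range (k + 1), G i := by
  by_cases hGk : e + 1 ≤ G k
  · calc (e + 1) * k ≤ (k + 1) * (e + 1) := by nlinarith
      _ ≤ ∑ i ∈ range (k + 1), G i := by
        simpa using card_nsmul_le_sum (range (k + 1)) G (e + 1)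
          fun i hi => hGk.trans (hG (mem_range_succ_iff.mp hi))
  · obtain ⟨n, hn, hkn⟩ := (ht.and (eventually_ge_atTop (k + 1))).exists
    obtain ⟨d, rfl⟩ := Nat.exists_eq_add_of_le hkn
    have hconst : ∀ i, G (k + 1 + i) = e :=
      fun i => le_antisymm ((hG (show k ≤ k + 1 + i by omega)).trans (by omega)) (he _)
    rw [sum_range_add] at hn
    simp only [hconst, sum_const, card_range, smul_eq_mul] at hn
    nlinarith

end PartialSums

section PowersOfParameter

variable {R : Type*} [CommRing R] [IsLocalRing R] {x : R} {c : ℕ}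
  {len : ℕ → ℕ} {e : ℕ}

lemma length_quotient_sup_span_pow_ne_top (hc : maximalIdeal R ^ c ≤ Ideal.span {x})
    (hlen : ∀ n, length R (R ⧸ maximalIdeal R ^ (n + 1)) = len n) (C : Ideal R) (n : ℕ) :
    length R (R ⧸ (C ⊔ Ideal.span {x ^ n})) ≠ ⊤ := by
  have hle : maximalIdeal R ^ (c * n + 1) ≤ C ⊔ Ideal.span {x ^ n} :=
    calc maximalIdeal R ^ (c * n + 1) ≤ (maximalIdeal R ^ c) ^ n := by
          rw [← pow_mul]; exact Ideal.pow_le_pow_right (Nat.le_succ _)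
      _ ≤ Ideal.span {x} ^ n := Ideal.pow_right_mono hc n
      _ = Ideal.span {x ^ n} := Ideal.span_singleton_pow x n
      _ ≤ C ⊔ Ideal.span {x ^ n} := le_sup_right
  exact ne_top_of_le_ne_top (hlen (c * n) ▸ ENat.natCast_ne_top _) (length_quotient_antitone hle)

lemma len_le_length_add_length_quotient_sup_span_pow (hxm : x ∈ maximalIdeal R)
    (hlen : ∀ n, length R (R ⧸ maximalIdeal R ^ (n + 1)) = len n) (C : Ideal R) (n : ℕ) :
    (len n : ℕ∞) ≤ length R C + length R (R ⧸ (C ⊔ Ideal.span {x ^ (n + 1)})) := by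
  have hle : Ideal.span {x ^ (n + 1)} ≤ maximalIdeal R ^ (n + 1) := by
    rw [← Ideal.span_singleton_pow]
    exact Ideal.pow_right_mono ((Ideal.span_singleton_le_iff_mem _).mpr hxm) _
  rw [← hlen]
  exact (length_quotient_antitone hle).trans (length_quotient_le_add C _)

lemma exists_antitone_ge_of_length_quotient_sup_span_pow (hxm : x ∈ maximalIdeal R)
    (hc : maximalIdeal R ^ c ≤ Ideal.span {x})
    (hlen : ∀ n, length R (R ⧸ maximalIdeal R ^ (n + 1)) = len n)
    (hmult : Tendsto (fun n : ℕ => (len n : ℝ) / n) atTop (𝓝 e)) {C : Ideal R} {B : ℕ}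
    (hC : length R C = B) :
    ∃ G : ℕ → ℕ, Antitone G ∧ (∀ j, e ≤ G j) ∧
      ∀ n, length R (R ⧸ (C ⊔ Ideal.span {x ^ n})) = ∑ i ∈ range n, G i := by
  have hfin := length_quotient_sup_span_pow_ne_top hc hlen C
  have hgap : ∀ j, powGap C x j ≠ ⊤ := fun j => ne_top_of_le_ne_top (hfin (j + 1)) (by
    rw [length_quotient_sup_span_pow_succ]; exact le_self_add)
  set G := fun j => (powGap C x j).toNat
  have hsum : ∀ n, length R (R ⧸ (C ⊔ Ideal.span {x ^ n})) = ∑ i ∈ range n, G i := by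
    intro n
    rw [length_quotient_sup_span_pow_eq_sum, Nat.cast_sum]
    exact sum_congr rfl fun i _ => (ENat.natCast_toNat (hgap i)).symm
  have hG : Antitone G := fun i j hij => ENat.toNat_le_toNat (powGap_antitone C x hij) (hgap i)
  refine ⟨G, hG, le_of_tendsto_div_of_le_add_sum hG hmult (B := B) (.of_forall fun n => ?_),
    hsum⟩
  have := len_le_length_add_length_quotient_sup_span_pow hxm hlen C n
  rw [hC, hsum] at this
  exact_mod_cast this

variable [IsNoetherianRing R]

/-- Beyond the exponent killing the torsion `T`, `(x^n)` meets `T` trivially, so `T` contributes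
its full length `t` to `R / (x^n)`; the rest has at least `e` per step. -/
lemma eventually_add_mul_le_length_quotient_span_pow (hxm : x ∈ maximalIdeal R)
    (hc : maximalIdeal R ^ c ≤ Ideal.span {x})
    (hlen : ∀ n, length R (R ⧸ maximalIdeal R ^ (n + 1)) = len n)
    (hmult : Tendsto (fun n : ℕ => (len n : ℝ) / n) atTop (𝓝 e)) {t : ℕ}
    (ht : length R (mPowTorsion (maximalIdeal R)) = t) :
    ∀ᶠ n in atTop, ((t + n * e : ℕ) : ℕ∞) ≤ length R (R ⧸ Ideal.span {x ^ n}) := by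
  obtain ⟨G, -, he, hsum⟩ :=
    exists_antitone_ge_of_length_quotient_sup_span_pow hxm hc hlen hmult ht
  obtain ⟨s, hs⟩ := exists_pow_annihilates_mPowTorsion (maximalIdeal R)
  filter_upwards [eventually_ge_atTop s] with n hn
  rw [length_quotient_eq_add_of_disjoint (disjoint_mPowTorsion_span_pow hxm hc hs hn), ht, hsum]
  have hmul : n * e ≤ ∑ i ∈ range n, G i := by
    simpa using card_nsmul_le_sum (range n) G e fun i _ => he i
  exact_mod_cast Nat.add_le_add_left hmul t

end PowersOfParameter

theorem dim_one_improved_lower_bound_general (R : Type*)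
    [CommRing R] [IsNoetherianRing R] [IsLocalRing R]
    (hdim : ringKrullDim R = 1)
    (t : ℕ)
    (ht : moduleLength R ↥(mPowTorsion (IsLocalRing.maximalIdeal R)) = (t : ℕ∞))
    (len : ℕ → ℕ)
    (hlen : ∀ n, (len n : WithBot ℕ∞) =
      moduleLength R (R ⧸ (IsLocalRing.maximalIdeal R ^ (n + 1))))
    (e : ℕ)
    (hmult : Filter.Tendsto (fun n : ℕ => (len n : ℝ) / (n : ℝ))
      Filter.atTop (nhds (e : ℝ))) :
    ∃ x ∈ IsLocalRing.maximalIdeal R,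
      x ∉ IsLocalRing.maximalIdeal R ^ 2 ∧
      (Ideal.span {x}).radical = IsLocalRing.maximalIdeal R ∧
      ∀ k : ℕ, k ≤ t →
        (((e + 1) * k : ℕ) : WithBot ℕ∞) ≤
          moduleLength R (R ⧸ Ideal.span {x ^ (k + 1)}) := by
  obtain ⟨x, hxm, hxsq, hxrad⟩ := exists_mem_maximalIdeal_notMem_sq_radical_eq hdim
  refine ⟨x, hxm, hxsq, hxrad, fun k hk => ?_⟩
  obtain ⟨c, hc⟩ := Ideal.exists_pow_le_of_le_radical_of_fg hxrad.ge (IsNoetherian.noetherian _)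
  have hlen' : ∀ n, length R (R ⧸ maximalIdeal R ^ (n + 1)) = len n := fun n => by
    exact_mod_cast ((hlen n).trans (moduleLength_eq_length _ _)).symm
  have ht' : length R (mPowTorsion (maximalIdeal R)) = t := by
    exact_mod_cast (moduleLength_eq_length _ _).symm.trans ht
  obtain ⟨G, hG, he, hsum⟩ := exists_antitone_ge_of_length_quotient_sup_span_pow hxm hc hlen'
    hmult (C := ⊥) (B := 0) length_bot
  have hgrowth : ∀ᶠ n in atTop, t + n * e ≤ ∑ i ∈ range n, G i := by
    filter_upwards [eventually_add_mul_le_length_quotient_span_pow hxm hc hlen' hmult ht']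
      with n hn
    rw [← bot_sup_eq (Ideal.span {x ^ n}), hsum] at hn
    exact_mod_cast hn
  rw [moduleLength_eq_length, ← bot_sup_eq (Ideal.span {x ^ (k + 1)}), hsum]
  exact_mod_cast mul_le_sum_range_succ_of_antitone hG he hgrowth hk

/-- Lemma 4.2(5): for a Noetherian complete local `K`-algebra `R` of dimension `1` with residue
field `K` infinite, multiplicity `e` and `m`-torsion length `t`, there is a suitable
`x ∈ m \ m²` with `√(x) = m` such that for all `k ≤ t`,
`length(R/(x^{k+1})) ≥ (e+1)·k`. -/
theorem dim_one_improved_lower_bound (K R : Type*) [Field K] [Infinite K]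
    [CommRing R] [IsNoetherianRing R] [IsLocalRing R] [Algebra K R]
    [IsAdicComplete (IsLocalRing.maximalIdeal R) R]
    (hres : Function.Bijective (algebraMap K (IsLocalRing.ResidueField R)))
    (hdim : ringKrullDim R = 1)
    (t : ℕ)
    (ht : moduleLength R ↥(mPowTorsion (IsLocalRing.maximalIdeal R)) = (t : ℕ∞))
    (len : ℕ → ℕ)
    (hlen : ∀ n, (len n : WithBot ℕ∞) =
      moduleLength R (R ⧸ (IsLocalRing.maximalIdeal R ^ (n + 1))))
    (e : ℕ)
    (hmult : Filter.Tendsto (fun n : ℕ => (len n : ℝ) / (n : ℝ))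
      Filter.atTop (nhds (e : ℝ))) :
    ∃ x ∈ IsLocalRing.maximalIdeal R,
      x ∉ IsLocalRing.maximalIdeal R ^ 2 ∧
      (Ideal.span {x}).radical = IsLocalRing.maximalIdeal R ∧
      ∀ k : ℕ, k ≤ t →
        (((e + 1) * k : ℕ) : WithBot ℕ∞) ≤
          moduleLength R (R ⧸ Ideal.span {x ^ (k + 1)}) :=
  dim_one_improved_lower_bound_general R hdim t ht len hlen e hmult
end
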